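/- In an SP-structure satisfying Symmetry, Non-negativity, Boundedness, O-Projection, and Factorization: if a ⊥ b, x ⊥ a, and p(y,a) + p(y,b) = 1, then p(x,y) = p(x,b)·p(y,b). -/

import Mathlib

variable {Ω : Type*}

def IsOrtho (p : Ω → Ω → ℝ) (A : Set Ω) : Prop :=
  ∀ x ∈ A, ∀ y ∈ A, x ≠ y → p x y = 0

noncomputable def pSet (p : Ω → Ω → ℝ) (x : Ω) (A : Set Ω) : ℝ :=
  ∑' a : A, p x a

def Symm (p : Ω → Ω → ℝ) : Prop := ∀ x y, p x y = p y x

def Nonneg (p : Ω → Ω → ℝ) : Prop := ∀ x y, 0 ≤ p x y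

def Bounded (p : Ω → Ω → ℝ) : Prop :=
  ∀ (x : Ω) (A : Set Ω), IsOrtho p A →
    Summable (fun a : A => p x a) ∧ pSet p x A ≤ 1

def OProj (p : Ω → Ω → ℝ) : Prop :=
  ∀ (x : Ω) (A : Set Ω), IsOrtho p A → pSet p x A < 1 →
    ∃ y, pSet p y A = 0 ∧ pSet p x A + p x y = 1

def Factor (p : Ω → Ω → ℝ) : Prop :=
  ∀ (x y z : Ω) (A : Set Ω), IsOrtho p A → pSet p y A = 1 → pSet p z A = 1 →
    p x y = pSet p x A → p x z = p x y * p y z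

def Subgen (p : Ω → Ω → ℝ) (A : Set Ω) : Set Ω := {x | pSet p x A = 1}

def IsSubspace (p : Ω → Ω → ℝ) (X : Set Ω) : Prop :=
  ∃ A, IsOrtho p A ∧ X = Subgen p A

def Standard (p : Ω → Ω → ℝ) : Prop := ∀ x y, p x y = 1 → x = y

/-! If `p x b = 1`, Factorization over `{b}` gives the claim. Otherwise O-Projection of `x` onto
`{a, b}` yields `w ⊥ a, b` with `p x b + p x w = 1`, so `x` lies in the closure of `{b, w}`.
Boundedness on the ortho-set `{a, b, w}` together with `p y a + p y b = 1` forces `y ⊥ w`, hence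
`p y {b, w} = p y b`, and Factorization over `{b, w}` with base point `b` gives
`p y x = p y b * p b x`. -/

lemma pSet_singleton (p : Ω → Ω → ℝ) (z u : Ω) : pSet p z {u} = p z u :=
  tsum_singleton u (p z)

lemma pSet_pair (p : Ω → Ω → ℝ) {u v : Ω} (huv : u ≠ v) (z : Ω) :
    pSet p z {u, v} = p z u + p z v := by
  classical
  rw [pSet, show ({u, v} : Set Ω) = (({u, v} : Finset Ω) : Set Ω) by simp,
    Finset.tsum_subtype', Finset.sum_pair huv]

lemma pSet_triple (p : Ω → Ω → ℝ) {u v w : Ω} (huv : u ≠ v) (huw : u ≠ w)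
    (hvw : v ≠ w) (z : Ω) : pSet p z {u, v, w} = p z u + p z v + p z w := by
  classical
  rw [pSet, show ({u, v, w} : Set Ω) = (({u, v, w} : Finset Ω) : Set Ω) by simp,
    Finset.tsum_subtype', Finset.sum_insert (by simp [huv, huw]), Finset.sum_pair hvw, add_assoc]

lemma isOrtho_singleton (p : Ω → Ω → ℝ) (u : Ω) : IsOrtho p {u} := by
  rintro x rfl y rfl hxy
  exact absurd rfl hxy

section SPStructure

variable {p : Ω → Ω → ℝ}

lemma IsOrtho.insert (hS : Symm p) {A : Set Ω} (hA : IsOrtho p A) {u : Ω}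
    (hu : ∀ a ∈ A, p u a = 0) : IsOrtho p (insert u A) := by
  rintro x (rfl | hx) y (rfl | hy) hxy
  · exact absurd rfl hxy
  · exact hu y hy
  · rw [hS]; exact hu x hx
  · exact hA x hx y hy hxy

lemma isOrtho_pair (hS : Symm p) {u v : Ω} (huv : p u v = 0) : IsOrtho p {u, v} :=
  (isOrtho_singleton p v).insert hS (by simpa using huv)

lemma self_eq_one (hS : Symm p) (hB : Bounded p) (hP : OProj p) (x : Ω) : p x x = 1 := by
  have hle : p x x ≤ 1 := pSet_singleton p x x ▸ (hB x {x} (isOrtho_singleton p x)).2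
  by_contra hne
  obtain ⟨v, hvx, hxv⟩ :=
    hP x {x} (isOrtho_singleton p x) (by rw [pSet_singleton]; exact hle.lt_of_ne hne)
  rw [pSet_singleton] at hvx hxv
  rw [hS x v, hvx, add_zero] at hxv
  exact hne hxv

lemma ne_of_orthogonal (hS : Symm p) (hB : Bounded p) (hP : OProj p) {u v : Ω}
    (huv : p u v = 0) : u ≠ v := by
  rintro rfl
  simp [self_eq_one hS hB hP u] at huv

lemma Factor.eq_mul (hS : Symm p) (hF : Factor p) {A : Set Ω} (hA : IsOrtho p A) {b x y : Ω}
    (hb : pSet p b A = 1) (hx : pSet p x A = 1) (hy : pSet p y A = p y b) :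
    p x y = p x b * p y b := by
  rw [hS x y, hF y b x A hA hb hx hy.symm, hS b x, mul_comm]

lemma exists_orthogonal_to_pair (hS : Symm p) (hN : Nonneg p) (hB : Bounded p) (hP : OProj p)
    {a b x : Ω} (hab : p a b = 0) (hxa : p x a = 0) (hxb : p x b ≠ 1) :
    ∃ w, p w a = 0 ∧ p w b = 0 ∧ p x b + p x w = 1 := by
  have hne := ne_of_orthogonal hS hB hP hab
  have hx : pSet p x {a, b} = p x b := by rw [pSet_pair p hne, hxa, zero_add]
  have hlt : pSet p x {a, b} < 1 :=
    hx ▸ (hx ▸ (hB x {a, b} (isOrtho_pair hS hab)).2).lt_of_ne hxb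
  obtain ⟨w, hw, hxw⟩ := hP x {a, b} (isOrtho_pair hS hab) hlt
  rw [pSet_pair p hne] at hw
  refine ⟨w, ?_, ?_, hx ▸ hxw⟩ <;> linarith [hN w a, hN w b]

lemma eq_zero_of_add_eq_one (hS : Symm p) (hN : Nonneg p) (hB : Bounded p) (hP : OProj p)
    {a b w y : Ω} (hab : p a b = 0) (hwa : p w a = 0) (hwb : p w b = 0)
    (hy : p y a + p y b = 1) : p y w = 0 := by
  have hortho : IsOrtho p {a, b, w} :=
    (isOrtho_pair hS (hS b w ▸ hwb)).insert hS (by simpa [hS a w] using ⟨hab, hwa⟩)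
  have hle := (hB y _ hortho).2
  rw [pSet_triple p (ne_of_orthogonal hS hB hP hab) (ne_of_orthogonal hS hB hP (hS a w ▸ hwa))
    (ne_of_orthogonal hS hB hP (hS b w ▸ hwb))] at hle
  linarith [hN y w]

end SPStructure

theorem stmt8 (p : Ω → Ω → ℝ) (h1 : Symm p) (h2 : Nonneg p) (h3 : Bounded p)
    (h4 : OProj p) (h5 : Factor p) (a b x y : Ω)
    (hab : p a b = 0) (hxa : p x a = 0) (hy : p y a + p y b = 1) :
    p x y = p x b * p y b := by
  have hbb := self_eq_one h1 h3 h4 b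
  by_cases hxb : p x b = 1
  · exact h5.eq_mul h1 (isOrtho_singleton p b) (by rwa [pSet_singleton])
      (by rwa [pSet_singleton]) (pSet_singleton p y b)
  · obtain ⟨w, hwa, hwb, hxw⟩ := exists_orthogonal_to_pair h1 h2 h3 h4 hab hxa hxb
    have hyw := eq_zero_of_add_eq_one h1 h2 h3 h4 hab hwa hwb hy
    have hbw := ne_of_orthogonal h1 h3 h4 (h1 b w ▸ hwb)
    exact h5.eq_mul h1 (isOrtho_pair h1 (h1 b w ▸ hwb))
      (by rw [pSet_pair p hbw, hbb, h1 b w, hwb, add_zero])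
      (by rw [pSet_pair p hbw, hxw]) (by rw [pSet_pair p hbw, hyw, add_zero])
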